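/- Let K(X) = (1/2)κ(tr(XᵀX)) with κ differentiable and κ'(u) ≤ 0 for all u ≥ 0, and suppose the denominator is nonzero. Then the mean-shift update Y^{(s+1)} = Y^{(s)} + M(Y^{(s)}), where M(Y) = [Σₙ κ'(h⁻² tr((Xₙ−Y)ᵀ(Xₙ−Y)))(Xₙ−Y)] / [Σₙ κ'(h⁻² tr((Xₙ−Y)ᵀ(Xₙ−Y)))], equals Y^{(s)} + α_s ∇f̂(Y^{(s)};h) with adaptive step size α_s = [−(1/(N h^{PT+2})) Σₙ κ'(h⁻² tr((Xₙ−Y^{(s)})ᵀ(Xₙ−Y^{(s)})))]⁻¹ ≥ 0; i.e. the matrix-variate mean-shift iteration is a gradient ascent step on f̂. -/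

import Mathlib

/-!
By the chain rule, the gradient of `Z ↦ κ(h⁻²‖Xₙ - Z‖²)` at `Y` is
`-2h⁻²κ'(h⁻²‖Xₙ - Y‖²)(Xₙ - Y)`, so `∇f̂(Y)` is `-1/(N h^{PT+2})` times the numerator of the
mean shift `M(Y)`. Multiplying by `α`, the inverse of `-1/(N h^{PT+2})` times the denominator,
gives exactly `M(Y)`; and `α ≥ 0` because `κ' ≤ 0` at the nonnegative arguments `h⁻²‖Xₙ - Y‖²`.
-/

section Gradient

variable {F : Type*} [NormedAddCommGroup F] [InnerProductSpace ℝ F] [CompleteSpace F]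
  {x : F}

theorem HasGradientAt.const_mul {f : F → ℝ} {f' : F} (hf : HasGradientAt f f' x) (a : ℝ) :
    HasGradientAt (fun y => a * f y) (a • f') x := by
  rw [hasGradientAt_iff_hasFDerivAt, map_smul] at *
  exact hf.const_mul a

theorem HasGradientAt.fun_sum {ι : Type*} {s : Finset ι} {f : ι → F → ℝ} {f' : ι → F}
    (hf : ∀ i ∈ s, HasGradientAt (f i) (f' i) x) :
    HasGradientAt (fun y => ∑ i ∈ s, f i y) (∑ i ∈ s, f' i) x := by
  simp only [hasGradientAt_iff_hasFDerivAt, map_sum] at *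
  exact HasFDerivAt.fun_sum hf

theorem HasDerivAt.comp_hasGradientAt {g : ℝ → ℝ} {g' : ℝ} {f : F → ℝ} {f' : F}
    (hg : HasDerivAt g g' (f x)) (hf : HasGradientAt f f' x) :
    HasGradientAt (g ∘ f) (g' • f') x := by
  rw [hasGradientAt_iff_hasFDerivAt, map_smul] at *
  exact hg.comp_hasFDerivAt x hf

theorem hasGradientAt_norm_sub_sq (X : F) :
    HasGradientAt (fun Z => ‖X - Z‖ ^ 2) ((2 : ℝ) • (x - X)) x := by
  rw [hasGradientAt_iff_hasFDerivAt]
  refine ((hasFDerivAt_id x).const_sub X).norm_sq.congr_fderiv ?_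
  ext v
  simp

theorem hasGradientAt_comp_mul_norm_sub_sq {κ : ℝ → ℝ} (c : ℝ) (X : F)
    (hκ : DifferentiableAt ℝ κ (c * ‖X - x‖ ^ 2)) :
    HasGradientAt (fun Z => κ (c * ‖X - Z‖ ^ 2))
      ((2 * c * deriv κ (c * ‖X - x‖ ^ 2)) • (x - X)) x := by
  have := hκ.hasDerivAt.comp_hasGradientAt (f := fun Z => c * ‖X - Z‖ ^ 2)
    ((hasGradientAt_norm_sub_sq X).const_mul c)
  rwa [smul_smul, smul_smul, mul_comm, ← mul_assoc, mul_right_comm] at this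

end Gradient

theorem norm_inv_smul_sq {E : Type*} [SeminormedAddCommGroup E] [NormedSpace ℝ E]
    (h : ℝ) (v : E) : ‖h⁻¹ • v‖ ^ 2 = h ^ (-2 : ℤ) * ‖v‖ ^ 2 := by
  rw [norm_smul, mul_pow, Real.norm_eq_abs, sq_abs, zpow_neg, inv_pow]
  norm_cast

theorem hasGradientAt_kernel_density_estimate {F : Type*} [NormedAddCommGroup F]
    [InnerProductSpace ℝ F] [CompleteSpace F] {ι : Type*} (s : Finset ι) (X : ι → F)
    {κ : ℝ → ℝ} (hκ : Differentiable ℝ κ) (a h : ℝ) (Y : F) :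
    HasGradientAt (fun Z => a * ∑ i ∈ s, (1 / 2) * κ (‖h⁻¹ • (X i - Z)‖ ^ 2))
      (-(a * h ^ (-2 : ℤ)) •
        ∑ i ∈ s, deriv κ (h ^ (-2 : ℤ) * ‖X i - Y‖ ^ 2) • (X i - Y)) Y := by
  simp only [norm_inv_smul_sq]
  have := (HasGradientAt.fun_sum fun i (_ : i ∈ s) =>
    ((hasGradientAt_comp_mul_norm_sub_sq (h ^ (-2 : ℤ)) (X i) (x := Y) (hκ _)).const_mul
      (1 / 2))).const_mul a
  convert this using 1
  rw [Finset.smul_sum, Finset.smul_sum]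
  refine Finset.sum_congr rfl fun i _ => ?_
  module

/-- With `K(X) = (1/2)κ(tr(XᵀX))`, `κ` differentiable with `κ' ≤ 0`, and
nonzero denominator, the mean-shift update `Y + M(Y)`, where
`M(Y) = [Σₙ κ'(h⁻²‖Xₙ-Y‖²)(Xₙ-Y)] / [Σₙ κ'(h⁻²‖Xₙ-Y‖²)]`, equals
`Y + α • ∇f̂(Y;h)` with the adaptive step size
`α = [-(1/(N h^{PT+2})) Σₙ κ'(h⁻²‖Xₙ-Y‖²)]⁻¹ ≥ 0`: the matrix-variate mean shift is
a gradient ascent step on the KDE `f̂(X;h) = (1/(N h^{PT})) Σₙ K(h⁻¹(Xₙ - X))`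
(matrices `ℝ^{P×T}` identified with the Euclidean space `ℝ^{PT}`). -/
theorem mean_shift_is_gradient_ascent (P T N : ℕ)
    (Xs : Fin N → EuclideanSpace ℝ (Fin P × Fin T)) (h : ℝ) (hh : 0 < h)
    (κ : ℝ → ℝ) (hκ : Differentiable ℝ κ)
    (hκ' : ∀ u : ℝ, 0 ≤ u → deriv κ u ≤ 0)
    (Y : EuclideanSpace ℝ (Fin P × Fin T))
    (hden : (∑ n : Fin N, deriv κ (h ^ (-2 : ℤ) * ‖Xs n - Y‖ ^ 2)) ≠ 0) :
    let M : EuclideanSpace ℝ (Fin P × Fin T) :=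
      (∑ n : Fin N, deriv κ (h ^ (-2 : ℤ) * ‖Xs n - Y‖ ^ 2))⁻¹ •
        (∑ n : Fin N, deriv κ (h ^ (-2 : ℤ) * ‖Xs n - Y‖ ^ 2) • (Xs n - Y))
    let α : ℝ :=
      (-(1 / ((N : ℝ) * h ^ (P * T + 2))) *
        ∑ n : Fin N, deriv κ (h ^ (-2 : ℤ) * ‖Xs n - Y‖ ^ 2))⁻¹
    0 ≤ α ∧
    Y + M = Y + α • gradient (fun Z : EuclideanSpace ℝ (Fin P × Fin T) =>
        (1 / ((N : ℝ) * h ^ (P * T))) *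
          ∑ n : Fin N, (1 / 2) * κ (‖(h : ℝ)⁻¹ • (Xs n - Z)‖ ^ 2)) Y := by
  dsimp only
  have hN : (N : ℝ) ≠ 0 := Nat.cast_ne_zero.2 (by rintro rfl; simp at hden)
  have hscale :
      1 / ((N : ℝ) * h ^ (P * T)) * h ^ (-2 : ℤ) = 1 / ((N : ℝ) * h ^ (P * T + 2)) := by
    rw [zpow_neg, pow_add]
    norm_cast
    field_simp
  have hgrad := (hasGradientAt_kernel_density_estimate Finset.univ Xs hκ
    (1 / ((N : ℝ) * h ^ (P * T))) h Y).gradient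
  rw [hscale] at hgrad
  refine ⟨?_, ?_⟩
  · have hS : ∑ n : Fin N, deriv κ (h ^ (-2 : ℤ) * ‖Xs n - Y‖ ^ 2) ≤ 0 :=
      Finset.sum_nonpos fun n _ => hκ' _ (by positivity)
    exact inv_nonneg.2 (mul_nonneg_of_nonpos_of_nonpos (neg_nonpos.2 (by positivity)) hS)
  · rw [hgrad, smul_smul]
    congr 2
    field_simp
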